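/- The partial derivative of G with respect to u at the point (z,u) = (π/2, 1) equals (√2/4)(2 − π); in particular ∂_u G(π/2, 1) ≠ 0. Together with ∂_z G(π/2, 1) = −√2/2 ≠ 0, this gives ∂_z G(π/2,1) · ∂_u G(π/2,1) ≠ 0. -/

import Mathlib

/-!
Writing `1 - 2u = -t²` with `t ≠ 0`, the defining series of `G` splits into the series of
`cos ((z/2) t)` and of `sin ((z/2) t) / t`. Near `u = 1` one may take `t = (2u - 1)^{1/2}`,
which is holomorphic there with `t(1) = 1` and `t'(1) = 1`, so both partial derivatives
follow from this closed form by the chain rule, evaluated with `sin (π/4) = cos (π/4) = √2/2`.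
-/

/-- The entire function
`G(z,u) = cosh((z/2)√(1−2u)) − sinh((z/2)√(1−2u))/√(1−2u)`,
defined by its (everywhere convergent) power series
`G(z,u) = Σ_m (1−2u)^m [ (z/2)^{2m}/(2m)! − (z/2)^{2m+1}/(2m+1)! ]`,
which makes sense for all `z, u ∈ ℂ` and is independent of the branch of the
square root `√(1−2u)`. -/
noncomputable def G (z u : ℂ) : ℂ :=
  ∑' m : ℕ, (1 - 2 * u) ^ m *
    ((z / 2) ^ (2 * m) / (Nat.factorial (2 * m) : ℂ)
      - (z / 2) ^ (2 * m + 1) / (Nat.factorial (2 * m + 1) : ℂ))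

open Complex

theorem hasSum_neg_sq_pow_mul_sub {t : ℂ} (ht : t ≠ 0) (x : ℂ) :
    HasSum (fun m : ℕ => (-t ^ 2) ^ m *
      (x ^ (2 * m) / (2 * m).factorial - x ^ (2 * m + 1) / (2 * m + 1).factorial))
      (cos (x * t) - sin (x * t) / t) := by
  refine ((hasSum_cos (x * t)).sub ((hasSum_sin (x * t)).div_const t)).congr_fun fun m => ?_
  field_simp
  ring

theorem G_eq_cos_sub_sin_div {u t : ℂ} (ht : t ^ 2 = 2 * u - 1) (ht0 : t ≠ 0) (z : ℂ) :
    G z u = cos (z / 2 * t) - sin (z / 2 * t) / t := by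
  rw [← (hasSum_neg_sq_pow_mul_sub ht0 (z / 2)).tsum_eq, G, ht, neg_sub]

theorem G_one (z : ℂ) : G z 1 = cos (z / 2) - sin (z / 2) := by
  simpa using G_eq_cos_sub_sin_div (u := 1) (t := 1) (by norm_num) one_ne_zero z

theorem hasDerivAt_G_z_at_one (z : ℂ) :
    HasDerivAt (fun z => G z 1) (-(sin (z / 2) + cos (z / 2)) / 2) z := by
  have h := ((hasDerivAt_id' z).div_const 2).ccos.sub ((hasDerivAt_id' z).div_const 2).csin
  simp only [G_one]
  exact h.congr_deriv (by ring)

theorem hasDerivAt_two_mul_sub_one_cpow_inv_two :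
    HasDerivAt (fun u : ℂ => (2 * u - 1) ^ (2⁻¹ : ℂ)) 1 1 := by
  have h := (((hasDerivAt_id' (1 : ℂ)).const_mul 2).sub_const 1).cpow_const (c := 2⁻¹)
    (by norm_num)
  exact h.congr_deriv (by norm_num)

theorem hasDerivAt_cos_mul_sub_sin_mul_div_at_one (x : ℂ) :
    HasDerivAt (fun t => cos (x * t) - sin (x * t) / t) (sin x - x * (sin x + cos x)) 1 := by
  have hx : HasDerivAt (fun t : ℂ => x * t) x 1 := by
    simpa using (hasDerivAt_id' (1 : ℂ)).const_mul x
  have h := hx.ccos.sub (hx.csin.div (hasDerivAt_id' (1 : ℂ)) one_ne_zero)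
  exact h.congr_deriv (by simp; ring)

theorem hasDerivAt_G_u_at_one (z : ℂ) :
    HasDerivAt (fun u => G z u) (sin (z / 2) - z / 2 * (sin (z / 2) + cos (z / 2))) 1 := by
  have h := (hasDerivAt_cos_mul_sub_sin_mul_div_at_one (z / 2)).comp_of_eq 1
    hasDerivAt_two_mul_sub_one_cpow_inv_two (by norm_num)
  rw [mul_one] at h
  refine h.congr_of_eventuallyEq ?_
  filter_upwards [eventually_ne_nhds (show (1 : ℂ) ≠ 2⁻¹ by norm_num)] with u hu
  apply G_eq_cos_sub_sin_div
  · exact cpow_nat_inv_pow _ two_ne_zero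
  · rw [Ne, cpow_eq_zero_iff, sub_eq_zero, not_and_or]
    exact .inl fun h => hu (by linear_combination h / 2)

/-- `∂_u G(π/2, 1) = (√2/4)(2 − π) ≠ 0`, and together with
`∂_z G(π/2, 1) = −√2/2 ≠ 0` the product of the two partial derivatives is nonzero. -/
theorem partial_derivatives_G_nonzero :
    HasDerivAt (fun u : ℂ => G ((Real.pi : ℂ) / 2) u)
      ((Real.sqrt 2 : ℂ) / 4 * (2 - (Real.pi : ℂ))) 1 ∧
    HasDerivAt (fun z : ℂ => G z 1) (-(Real.sqrt 2 : ℂ) / 2) ((Real.pi : ℂ) / 2) ∧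
    ((Real.sqrt 2 : ℂ) / 4 * (2 - (Real.pi : ℂ)) ≠ 0) ∧
    (-(Real.sqrt 2 : ℂ) / 2 * ((Real.sqrt 2 : ℂ) / 4 * (2 - (Real.pi : ℂ))) ≠ 0) := by
  have hquarter : (Real.pi : ℂ) / 2 / 2 = (Real.pi / 4 : ℝ) := by push_cast; ring
  have hsin : sin ((Real.pi : ℂ) / 2 / 2) = (Real.sqrt 2 : ℂ) / 2 := by
    rw [hquarter, ← ofReal_sin, Real.sin_pi_div_four]; push_cast; rfl
  have hcos : cos ((Real.pi : ℂ) / 2 / 2) = (Real.sqrt 2 : ℂ) / 2 := by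
    rw [hquarter, ← ofReal_cos, Real.cos_pi_div_four]; push_cast; rfl
  have hsqrt2 : (Real.sqrt 2 : ℂ) ≠ 0 := by exact_mod_cast (Real.sqrt_pos.2 two_pos).ne'
  have hpi : (2 : ℂ) - Real.pi ≠ 0 := by
    exact_mod_cast sub_ne_zero.2 (Real.pi_gt_three.trans' (by norm_num)).ne
  have hdu : (Real.sqrt 2 : ℂ) / 4 * (2 - (Real.pi : ℂ)) ≠ 0 := by simp [hsqrt2, hpi]
  refine ⟨?_, ?_, hdu, mul_ne_zero (by simp [hsqrt2]) hdu⟩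
  · exact (hasDerivAt_G_u_at_one _).congr_deriv (by rw [hsin, hcos]; ring)
  · exact (hasDerivAt_G_z_at_one _).congr_deriv (by rw [hsin, hcos]; ring)
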